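/- For |q| < 1, the 'circle' triple sum ∑_{n₁,n₂,n₃≥0} q^{n₁+n₂+n₃+n₁n₂+n₂n₃+n₃n₁} / ((q;q)_{n₁}(q;q)_{n₂}(q;q)_{n₃}) equals 1/(q;q)_∞ · ∑_{n≥0} qⁿ/(q^{n+1};q)_{n+1}. -/

import Mathlib

/-- The finite q-Pochhammer symbol `(q;q)_n`. -/
noncomputable def qPoch (q : ℂ) (n : ℕ) : ℂ := ∏ i ∈ Finset.range n, (1 - q ^ (i + 1))

/-- The infinite q-Pochhammer symbol `(q;q)_∞`. -/
noncomputable def qPochInf (q : ℂ) : ℂ := ∏' i : ℕ, (1 - q ^ (i + 1))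

/-- The infinite q-Pochhammer symbol `(a;q)_∞ = ∏_{i≥0} (1 - a q^i)`. -/
noncomputable def pochInf (a q : ℂ) : ℂ := ∏' i : ℕ, (1 - a * q ^ i)

/-!
Write `(n₁, n₂, n₃) = (a, b, c)` and sum over `c` first: Euler's identity
`∑_c x^c/(q;q)_c = 1/(x;q)_∞` at `x = q^(a+b+1)` leaves
`q^(a+b+ab) (q;q)_(a+b) / ((q;q)_a (q;q)_b (q;q)_∞)`. Then sum over `b`: the q-binomial theorem
`∑_b [a+b, b]_q x^b = 1/(x;q)_(a+1)` at `x = q^(a+1)` leaves `q^a / ((q;q)_∞ (q^(a+1);q)_(a+1))`.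

For `E(x) = ∑_m x^m/(q;q)_m`, Euler's identity at the points `q^(k+1)` follows from the functional
equation `E(qx) = (1-x) E(x)` and the continuity of `E` at `0`; the q-binomial theorem follows from
the q-Pascal rule by induction on `a`. All series converge absolutely because `(q;q)_n` and its
inverse are bounded, being convergent sequences with nonzero limit
`(q;q)_∞ = exp (∑ log (1 - q^(i+1)))`.
-/

open Filter Topology Finset

lemma exists_forall_norm_le_of_tendsto {E : Type*} [SeminormedAddCommGroup E] {u : ℕ → E} {x : E}
    (hu : Tendsto u atTop (𝓝 x)) : ∃ C, ∀ n, ‖u n‖ ≤ C := by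
  obtain ⟨C, hC⟩ := isBounded_iff_forall_norm_le.1 (Metric.isBounded_range_of_tendsto u hu)
  exact ⟨C, fun n => hC _ ⟨n, rfl⟩⟩

lemma summable_norm_mul_pow_of_norm_le {𝕜 : Type*} [NormedDivisionRing 𝕜] {f : ℕ → 𝕜} {C : ℝ}
    (hf : ∀ n, ‖f n‖ ≤ C) {x : 𝕜} (hx : ‖x‖ < 1) : Summable fun n => ‖f n * x ^ n‖ := by
  refine .of_nonneg_of_le (fun _ => norm_nonneg _) (fun n => ?_)
    ((summable_geometric_of_lt_one (norm_nonneg x) hx).mul_left C)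
  rw [norm_mul, norm_pow]
  exact mul_le_mul_of_nonneg_right (hf n) (by positivity)

lemma qPoch_zero (q : ℂ) : qPoch q 0 = 1 := by simp [qPoch]

lemma qPoch_succ (q : ℂ) (n : ℕ) : qPoch q (n + 1) = qPoch q n * (1 - q ^ (n + 1)) :=
  prod_range_succ _ n

section qPoch

variable {q : ℂ}

lemma norm_pow_succ_lt_one (hq : ‖q‖ < 1) (k : ℕ) : ‖q ^ (k + 1)‖ < 1 := by
  rw [norm_pow]
  exact pow_lt_one₀ (norm_nonneg q) hq k.succ_ne_zero

lemma one_sub_pow_succ_ne_zero (hq : ‖q‖ < 1) (k : ℕ) : 1 - q ^ (k + 1) ≠ 0 :=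
  (isUnit_one_sub_of_norm_lt_one (norm_pow_succ_lt_one hq k)).ne_zero

lemma qPoch_ne_zero (hq : ‖q‖ < 1) (n : ℕ) : qPoch q n ≠ 0 :=
  prod_ne_zero_iff.2 fun k _ => one_sub_pow_succ_ne_zero hq k

lemma summable_pow_succ (hq : ‖q‖ < 1) : Summable fun i : ℕ => q ^ (i + 1) :=
  (summable_nat_add_iff 1).2 (summable_geometric_of_norm_lt_one hq)

lemma tendsto_qPoch (hq : ‖q‖ < 1) : Tendsto (qPoch q) atTop (𝓝 (qPochInf q)) := by
  have h := Complex.multipliable_one_add_of_summable (summable_pow_succ hq).neg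
  simp only [← sub_eq_add_neg] at h
  exact h.tendsto_prod_tprod_nat

lemma qPochInf_ne_zero (hq : ‖q‖ < 1) : qPochInf q ≠ 0 := by
  have hlog := Complex.summable_log_one_add_of_summable (summable_pow_succ hq).neg
  simp only [← sub_eq_add_neg] at hlog
  rw [qPochInf, ← Complex.cexp_tsum_eq_tprod (one_sub_pow_succ_ne_zero hq) hlog]
  exact Complex.exp_ne_zero _

lemma exists_forall_norm_inv_qPoch_le (hq : ‖q‖ < 1) : ∃ C, ∀ n, ‖(qPoch q n)⁻¹‖ ≤ C :=
  exists_forall_norm_le_of_tendsto ((tendsto_qPoch hq).inv₀ (qPochInf_ne_zero hq))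

end qPoch

section Euler

variable {q : ℂ}

noncomputable def eulerSeries (q x : ℂ) : ℂ := ∑' m : ℕ, x ^ m / qPoch q m

lemma summable_norm_pow_div_qPoch (hq : ‖q‖ < 1) {x : ℂ} (hx : ‖x‖ < 1) :
    Summable fun m => ‖x ^ m / qPoch q m‖ := by
  obtain ⟨C, hC⟩ := exists_forall_norm_inv_qPoch_le hq
  simpa only [div_eq_inv_mul] using summable_norm_mul_pow_of_norm_le hC hx

lemma eulerSeries_q_mul (hq : ‖q‖ < 1) {x : ℂ} (hx : ‖x‖ < 1) :
    eulerSeries q (q * x) = (1 - x) * eulerSeries q x := by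
  have hqx : ‖q * x‖ < 1 := by
    rw [norm_mul]
    exact mul_lt_one_of_nonneg_of_lt_one_left (norm_nonneg q) hq hx.le
  have hs := (summable_norm_pow_div_qPoch hq hx).of_norm
  have hs' := (summable_norm_pow_div_qPoch hq hqx).of_norm
  have hcoeff : ∀ m : ℕ, x ^ (m + 1) / qPoch q (m + 1) - (q * x) ^ (m + 1) / qPoch q (m + 1)
      = x * (x ^ m / qPoch q m) := by
    intro m
    rw [qPoch_succ, mul_pow]
    field_simp [qPoch_ne_zero hq m, one_sub_pow_succ_ne_zero hq m]
    ring
  have hdiff : eulerSeries q x - eulerSeries q (q * x) = x * eulerSeries q x := by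
    rw [eulerSeries, eulerSeries, ← hs.tsum_sub hs', (hs.sub hs').tsum_eq_zero_add]
    simp only [pow_zero, sub_self, zero_add, hcoeff, tsum_mul_left]
  linear_combination -hdiff

lemma eulerSeries_pow_succ (hq : ‖q‖ < 1) (k : ℕ) :
    eulerSeries q (q ^ (k + 1)) = qPoch q k * eulerSeries q q := by
  induction k with
  | zero => simp [qPoch_zero]
  | succ k ih =>
    rw [pow_succ', eulerSeries_q_mul hq (norm_pow_succ_lt_one hq k), ih, qPoch_succ]
    ring

lemma tendsto_eulerSeries_zero (hq : ‖q‖ < 1) :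
    Tendsto (eulerSeries q) (𝓝 0) (𝓝 1) := by
  obtain ⟨C, hC⟩ := exists_forall_norm_inv_qPoch_le hq
  have hsmall : ∀ᶠ x : ℂ in 𝓝 0, ‖x‖ ≤ 1 / 2 :=
    tendsto_norm_zero.eventually (ge_mem_nhds (by norm_num))
  have h := tendsto_tsum_of_dominated_convergence (f := fun x m => x ^ m / qPoch q m)
    (g := fun m => 0 ^ m / qPoch q m) (bound := fun m => C * (1 / 2) ^ m)
    (summable_geometric_two.mul_left C)
    (fun m => ((continuous_pow m).tendsto 0).div_const _)
    (hsmall.mono fun x hx m => by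
      rw [div_eq_inv_mul, norm_mul, norm_pow]
      gcongr
      exacts [(norm_nonneg _).trans (hC 0), hC m])
  rwa [tsum_eq_single 0 fun m hm => by simp [hm], pow_zero, qPoch_zero, div_one] at h

lemma eulerSeries_self (hq : ‖q‖ < 1) : eulerSeries q q = (qPochInf q)⁻¹ := by
  have hprod : Tendsto (fun N => eulerSeries q q * qPoch q N) atTop
      (𝓝 (eulerSeries q q * qPochInf q)) :=
    tendsto_const_nhds.mul (tendsto_qPoch hq)
  have hone : Tendsto (fun N => eulerSeries q q * qPoch q N) atTop (𝓝 1) := by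
    simp_rw [mul_comm (eulerSeries q q), ← eulerSeries_pow_succ hq]
    exact (tendsto_eulerSeries_zero hq).comp
      ((tendsto_pow_atTop_nhds_zero_of_norm_lt_one hq).comp (tendsto_add_atTop_nat 1))
  exact eq_inv_of_mul_eq_one_left (tendsto_nhds_unique hprod hone)

lemma eulerSeries_pow_succ_eq (hq : ‖q‖ < 1) (k : ℕ) :
    eulerSeries q (q ^ (k + 1)) = qPoch q k / qPochInf q := by
  rw [eulerSeries_pow_succ hq, eulerSeries_self hq, div_eq_mul_inv]

end Euler

section qBinom

variable {q : ℂ}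

noncomputable def qBinom (q : ℂ) (n m : ℕ) : ℂ := qPoch q (n + m) / (qPoch q n * qPoch q m)

lemma qBinom_zero_left (hq : ‖q‖ < 1) (m : ℕ) : qBinom q 0 m = 1 := by
  simp [qBinom, qPoch_zero, qPoch_ne_zero hq m]

lemma qBinom_zero_right (hq : ‖q‖ < 1) (n : ℕ) : qBinom q n 0 = 1 := by
  simp [qBinom, qPoch_zero, qPoch_ne_zero hq n]

lemma qBinom_succ_succ (hq : ‖q‖ < 1) (n m : ℕ) :
    qBinom q (n + 1) (m + 1) = qBinom q n (m + 1) + q ^ (n + 1) * qBinom q (n + 1) m := by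
  have hsucc : qPoch q (n + 1 + (m + 1))
      = qPoch q (n + (m + 1)) * (1 - q ^ (n + 1) * q ^ (m + 1)) := by
    rw [show n + 1 + (m + 1) = n + (m + 1) + 1 by omega, qPoch_succ, ← pow_add]
    ring_nf
  rw [qBinom, qBinom, qBinom, hsucc, show n + 1 + m = n + (m + 1) by omega, qPoch_succ q n,
    qPoch_succ q m]
  field_simp [qPoch_ne_zero hq n, qPoch_ne_zero hq m, one_sub_pow_succ_ne_zero hq n,
    one_sub_pow_succ_ne_zero hq m]
  ring

lemma exists_forall_norm_qBinom_le (hq : ‖q‖ < 1) : ∃ B, ∀ n m, ‖qBinom q n m‖ ≤ B := by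
  obtain ⟨C, hC⟩ := exists_forall_norm_le_of_tendsto (tendsto_qPoch hq)
  obtain ⟨D, hD⟩ := exists_forall_norm_inv_qPoch_le hq
  refine ⟨C * (D * D), fun n m => ?_⟩
  rw [qBinom, div_eq_mul_inv, mul_inv, norm_mul, norm_mul]
  have hD0 : 0 ≤ D := (norm_nonneg _).trans (hD 0)
  exact mul_le_mul (hC _) (mul_le_mul (hD n) (hD m) (norm_nonneg _) hD0) (by positivity)
    ((norm_nonneg _).trans (hC 0))

lemma summable_qBinom_mul_pow (hq : ‖q‖ < 1) {x : ℂ} (hx : ‖x‖ < 1) (n : ℕ) :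
    Summable fun m => qBinom q n m * x ^ m := by
  obtain ⟨B, hB⟩ := exists_forall_norm_qBinom_le hq
  exact (summable_norm_mul_pow_of_norm_le (hB n) hx).of_norm

lemma one_sub_mul_tsum_qBinom_succ (hq : ‖q‖ < 1) {x : ℂ} (hx : ‖x‖ < 1) (n : ℕ) :
    (1 - q ^ (n + 1) * x) * ∑' m, qBinom q (n + 1) m * x ^ m = ∑' m, qBinom q n m * x ^ m := by
  have hs := summable_qBinom_mul_pow hq hx
  have hshift : ∑' m, qBinom q (n + 1) (m + 1) * x ^ (m + 1)
      = ∑' m, qBinom q n (m + 1) * x ^ (m + 1)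
        + q ^ (n + 1) * x * ∑' m, qBinom q (n + 1) m * x ^ m := by
    rw [← tsum_mul_left, ← ((summable_nat_add_iff 1).2 (hs n)).tsum_add ((hs (n + 1)).mul_left _)]
    refine tsum_congr fun m => ?_
    rw [qBinom_succ_succ hq]
    ring
  have hpascal : ∑' m, qBinom q (n + 1) m * x ^ m
      = ∑' m, qBinom q n m * x ^ m + q ^ (n + 1) * x * ∑' m, qBinom q (n + 1) m * x ^ m := by
    conv_lhs => rw [(hs (n + 1)).tsum_eq_zero_add, hshift]
    rw [(hs n).tsum_eq_zero_add, qBinom_zero_right hq, qBinom_zero_right hq]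
    ring
  linear_combination hpascal

theorem tsum_qBinom_mul_pow (hq : ‖q‖ < 1) {x : ℂ} (hx : ‖x‖ < 1) (n : ℕ) :
    ∑' m, qBinom q n m * x ^ m = (∏ i ∈ range (n + 1), (1 - x * q ^ i))⁻¹ := by
  induction n with
  | zero =>
    simp [qBinom_zero_left hq, tsum_geometric_of_norm_lt_one hx]
  | succ n ih =>
    have hlt : ‖x * q ^ (n + 1)‖ < 1 := by
      rw [norm_mul]
      exact mul_lt_one_of_nonneg_of_lt_one_left (norm_nonneg x) hx (norm_pow_succ_lt_one hq n).le
    have hne : 1 - x * q ^ (n + 1) ≠ 0 := (isUnit_one_sub_of_norm_lt_one hlt).ne_zero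
    rw [prod_range_succ, mul_inv, ← ih, ← one_sub_mul_tsum_qBinom_succ hq hx n, mul_comm (q ^ _) x]
    field_simp

end qBinom

section circle

variable {q : ℂ}

noncomputable def circleTerm (q : ℂ) (a b c : ℕ) : ℂ :=
  q ^ (a + b + c + a * b + b * c + c * a) / (qPoch q a * qPoch q b * qPoch q c)

lemma norm_circleTerm_le (hq : ‖q‖ < 1) (a b c : ℕ) :
    ‖circleTerm q a b c‖
      ≤ ‖q ^ a / qPoch q a‖ * (‖q ^ b / qPoch q b‖ * ‖q ^ c / qPoch q c‖) := by
  have hnum : ‖q‖ ^ (a + b + c + a * b + b * c + c * a) ≤ ‖q‖ ^ a * (‖q‖ ^ b * ‖q‖ ^ c) := by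
    rw [← pow_add, ← pow_add]
    exact pow_le_pow_of_le_one (norm_nonneg q) hq.le (by omega)
  set den := ‖qPoch q a‖ * ‖qPoch q b‖ * ‖qPoch q c‖
  calc ‖circleTerm q a b c‖ = ‖q‖ ^ (a + b + c + a * b + b * c + c * a) / den := by
        simp only [den, circleTerm, norm_div, norm_mul, norm_pow]
    _ ≤ ‖q‖ ^ a * (‖q‖ ^ b * ‖q‖ ^ c) / den := by gcongr
    _ = _ := by simp only [norm_div, norm_pow]; ring

lemma summable_circleTerm (hq : ‖q‖ < 1) :
    Summable fun p : ℕ × ℕ × ℕ => circleTerm q p.1 p.2.1 p.2.2 := by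
  have he := summable_norm_pow_div_qPoch hq hq
  refine .of_norm_bounded (he.mul_of_nonneg (he.mul_of_nonneg he (fun _ => norm_nonneg _)
    (fun _ => norm_nonneg _)) (fun _ => norm_nonneg _) fun _ => by positivity) fun p => ?_
  exact norm_circleTerm_le hq _ _ _

lemma tsum_circleTerm (hq : ‖q‖ < 1) (a b : ℕ) :
    ∑' c, circleTerm q a b c = (qPochInf q)⁻¹ * (q ^ a * (qBinom q a b * (q ^ (a + 1)) ^ b)) := by
  have hterm : ∀ c, circleTerm q a b c
      = q ^ (a + b + a * b) / (qPoch q a * qPoch q b) * ((q ^ (a + b + 1)) ^ c / qPoch q c) := by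
    intro c
    rw [circleTerm, div_mul_div_comm, ← pow_mul, ← pow_add]
    ring_nf
  have hpow : q ^ (a + b + a * b) = q ^ a * (q ^ (a + 1)) ^ b := by
    rw [← pow_mul, ← pow_add]
    ring_nf
  rw [tsum_congr hterm, tsum_mul_left, ← eulerSeries, eulerSeries_pow_succ_eq hq, hpow, qBinom]
  ring

lemma tsum_tsum_circleTerm (hq : ‖q‖ < 1) (a : ℕ) :
    ∑' b, ∑' c, circleTerm q a b c
      = (qPochInf q)⁻¹ * (q ^ a / ∏ i ∈ range (a + 1), (1 - q ^ (a + 1) * q ^ i)) := by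
  simp_rw [tsum_circleTerm hq, tsum_mul_left,
    tsum_qBinom_mul_pow hq (norm_pow_succ_lt_one hq a), div_eq_mul_inv]

end circle

theorem stmt14 (q : ℂ) (hq : ‖q‖ < 1) :
    ∑' n : Fin 3 → ℕ,
        q ^ (n 0 + n 1 + n 2 + n 0 * n 1 + n 1 * n 2 + n 2 * n 0)
          / (qPoch q (n 0) * qPoch q (n 1) * qPoch q (n 2))
      = 1 / qPochInf q *
          ∑' n : ℕ, q ^ n / ∏ i ∈ Finset.range (n + 1), (1 - q ^ (n + 1) * q ^ i) := by
  let e : ℕ × ℕ × ℕ ≃ (Fin 3 → ℕ) :=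
    ((Equiv.refl ℕ).prodCongr (finTwoArrowEquiv ℕ).symm).trans (Fin.consEquiv fun _ => ℕ)
  have hs := summable_circleTerm hq
  rw [← e.tsum_eq]
  change ∑' p : ℕ × ℕ × ℕ, circleTerm q p.1 p.2.1 p.2.2 = _
  rw [hs.tsum_prod' hs.prod_factor, one_div, ← tsum_mul_left]
  refine tsum_congr fun a => ?_
  rw [(hs.prod_factor a).tsum_prod' (hs.prod_factor a).prod_factor]
  exact tsum_tsum_circleTerm hq a
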